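/- arXiv:1602.08760 — 2 statements merged into one kernel-verified Lean document; each statement's English description precedes it below -/
import Mathlib

section
/- With the same hypotheses (P an inner product, Q non-degenerate symmetric, Q(u,v) = P(Su,v), S² = Id), a subspace E ⊆ V satisfies E = S(E) if and only if E^P = E^Q. -/
/-!
Since `Q = P ∘ (S × id)`, a vector is `Q`-orthogonal to `E` exactly when it is `P`-orthogonal
to `S(E)`, so `E^Q = S(E)^P`. As `P` is nondegenerate and symmetric on a finite-dimensional
space, `W ↦ W^P` is an involution, hence injective, and `E^P = S(E)^P` holds iff `E = S(E)`.
-/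

namespace LinearMap.BilinForm

lemma nondegenerate_of_anisotropic {R M : Type*} [CommSemiring R] [AddCommMonoid M]
    [Module R M] {B : LinearMap.BilinForm R M} (hB : ∀ v, B v v = 0 → v = 0) :
    B.Nondegenerate :=
  ⟨fun v hv => hB v (hv v), fun v hv => hB v (hv v)⟩

lemma orthogonal_compLeft {R M : Type*} [CommSemiring R] [AddCommMonoid M] [Module R M]
    (B : LinearMap.BilinForm R M) (f : M →ₗ[R] M) (N : Submodule R M) :
    (B.compLeft f).orthogonal N = B.orthogonal (N.map f) := by
  ext v
  simp only [mem_orthogonal_iff, Submodule.mem_map, forall_exists_index, and_imp,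
    forall_apply_eq_imp_iff₂, compLeft_apply]

lemma orthogonal_injective {K V : Type*} [Field K] [AddCommGroup V] [Module K V]
    [FiniteDimensional K V] {B : LinearMap.BilinForm K V} (hB : B.Nondegenerate)
    (hB₀ : B.IsRefl) :
    Function.Injective B.orthogonal :=
  Function.LeftInverse.injective (orthogonal_orthogonal hB hB₀)

end LinearMap.BilinForm

open LinearMap.BilinForm

theorem stmt_6_general {V : Type*} [AddCommGroup V] [Module ℝ V] [FiniteDimensional ℝ V]
    (P Q : LinearMap.BilinForm ℝ V)
    (hPsymm : ∀ u v : V, P u v = P v u) (hPpos : ∀ v : V, v ≠ 0 → 0 < P v v)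
    (S : V →ₗ[ℝ] V) (hS : ∀ u v : V, Q u v = P (S u) v)
    (E : Submodule ℝ V) :
    E = Submodule.map S E ↔
      LinearMap.BilinForm.orthogonal P E = LinearMap.BilinForm.orthogonal Q E := by
  have hQ : Q = P.compLeft S := by ext u v; exact hS u v
  have hP : P.Nondegenerate :=
    nondegenerate_of_anisotropic fun v hv => by_contra fun h => (hPpos v h).ne' hv
  rw [hQ, orthogonal_compLeft, (orthogonal_injective hP (IsSymm.isRefl ⟨hPsymm⟩)).eq_iff]

/-- With `P` an inner product, `Q` a non-degenerate symmetric bilinear form,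
`Q(u,v) = P(Su,v)` and `S² = Id`: a subspace `E` satisfies `E = S(E)` if and only if
`E^P = E^Q`. -/
theorem stmt_6 {V : Type*} [AddCommGroup V] [Module ℝ V] [FiniteDimensional ℝ V]
    (P Q : LinearMap.BilinForm ℝ V)
    (hPsymm : ∀ u v : V, P u v = P v u) (hPpos : ∀ v : V, v ≠ 0 → 0 < P v v)
    (hQsymm : ∀ u v : V, Q u v = Q v u)
    (hQnd : LinearMap.BilinForm.Nondegenerate Q)
    (S : V →ₗ[ℝ] V) (hS : ∀ u v : V, Q u v = P (S u) v) (hS2 : ∀ v : V, S (S v) = v)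
    (E : Submodule ℝ V) :
    E = Submodule.map S E ↔
      LinearMap.BilinForm.orthogonal P E = LinearMap.BilinForm.orthogonal Q E :=
  stmt_6_general P Q hPsymm hPpos S hS E
end

section
/- Let Q be a non-degenerate symmetric bilinear form on a finite-dimensional real vector space V, E ⊆ V any subspace, and E₀ := E ∩ E^Q. A linear map T : E → V/E satisfies Q(Tx, x) = 0 for all x ∈ E₀ if and only if there exists a lift T′ : V → V of T (i.e. T′|_E composed with the projection V → V/E equals T) with Q(T′x, x) = 0 for all x ∈ V, i.e. T′ ∈ so(Q). -/
/-!
For any lift `S : V → V` of `T`, put `β(x, n) = Q(S x, n)`. Since `(E^Q)^Q = E`, an endomorphism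
`T'` lifts `T` exactly when `Q(T' x, n) = β(x, n)` for `x ∈ E`, `n ∈ E^Q`; and `T' ∈ so(Q)` exactly
when `ω(v, w) = Q(T' v, w)` is alternating. By non-degeneracy every bilinear form is such an `ω`,
so it suffices to find an alternating form agreeing with `β` on `E × E^Q`. If `β` vanishes on the
diagonal of `E ∩ E^Q`, one works: with projections `p` onto `E` preserving `E^Q` and `s` onto `E^Q`
preserving `E`, take `ω(v, w) = β(p v, s w) - β(p w, s v) + β(p s w, p s v)`.
-/

open LinearMap LinearMap.BilinForm Submodule

section

variable {K V : Type*} [Field K] [AddCommGroup V] [Module K V]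

theorem Submodule.exists_isProj_mapsTo (E O : Submodule K V) :
    ∃ p : Module.End K V, IsProj E p ∧ Set.MapsTo p O O := by
  obtain ⟨C₀, hC₀⟩ := (E ⊓ O).exists_isCompl
  have hO : (E ⊓ O) ⊔ (C₀ ⊓ O) = O := by
    rw [← sup_inf_assoc_of_le _ inf_le_right, hC₀.sup_eq_top, top_inf_eq]
  have hdisj : Disjoint (C₀ ⊓ O) E := by
    rw [disjoint_iff, inf_assoc, inf_comm O E]
    exact hC₀.symm.inf_eq_bot
  obtain ⟨C, hC₀C, hCE⟩ := hdisj.exists_isCompl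
  refine ⟨E.projection C hCE.symm,
    ⟨projection_apply_mem _, fun x hx ↦ projection_apply_of_mem_left _ hx⟩, fun n hn ↦ ?_⟩
  rw [SetLike.mem_coe, ← hO] at hn
  obtain ⟨a, ha, c, hc, rfl⟩ := mem_sup.mp hn
  rw [map_add, projection_apply_of_mem_left _ ha.1,
    (projection_apply_eq_zero_iff _).mpr (hC₀C hc), add_zero]
  exact ha.2

theorem LinearMap.BilinForm.exists_isAlt_eq_on (β : LinearMap.BilinForm K V)
    {E O : Submodule K V} (hβ : ∀ x ∈ E ⊓ O, β x x = 0) :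
    ∃ ω : LinearMap.BilinForm K V, ω.IsAlt ∧ ∀ x ∈ E, ∀ n ∈ O, ω x n = β x n := by
  obtain ⟨p, hp, hpO⟩ := E.exists_isProj_mapsTo O
  obtain ⟨s, hs, hsE⟩ := O.exists_isProj_mapsTo E
  refine ⟨β.compl₁₂ p s - (β.compl₁₂ p s).flip + (β.compl₁₂ (p ∘ₗ s) (p ∘ₗ s)).flip, ?_, ?_⟩
  · intro v
    simp only [add_apply, sub_apply, LinearMap.flip_apply, compl₁₂_apply, LinearMap.comp_apply,
      sub_self, zero_add]
    exact hβ _ ⟨hp.map_mem _, hpO (hs.map_mem v)⟩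
  · intro x hx n hn
    simp only [add_apply, sub_apply, LinearMap.flip_apply, compl₁₂_apply, LinearMap.comp_apply]
    rw [hp.map_id x hx, hs.map_id n hn, hp.map_id _ (hsE hx)]
    ring

theorem LinearMap.BilinForm.exists_skew_sub_mem [FiniteDimensional K V]
    {Q : LinearMap.BilinForm K V} (hQ : Q.Nondegenerate) (hQr : Q.IsRefl) (E : Submodule K V)
    (S : Module.End K V) (hS : ∀ x ∈ E ⊓ Q.orthogonal E, Q (S x) x = 0) :
    ∃ T' : Module.End K V, (∀ v, Q (T' v) v = 0) ∧ ∀ x ∈ E, T' x - S x ∈ E := by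
  obtain ⟨ω, hω, hωS⟩ := LinearMap.BilinForm.exists_isAlt_eq_on (Q.compl₁₂ S LinearMap.id) hS
  set T' : Module.End K V := (Q.toDual hQ).symm.toLinearMap ∘ₗ ω
  have hQT' : ∀ v w, Q (T' v) w = ω v w := fun v w ↦ apply_toDual_symm_apply (hB := hQ) (ω v) w
  refine ⟨T', fun v ↦ (hQT' v v).trans (hω v), fun x hx ↦ ?_⟩
  have hperp : T' x - S x ∈ Q.orthogonal (Q.orthogonal E) := by
    refine mem_orthogonal_iff.mpr fun n hn ↦ hQr _ _ ?_
    rw [map_sub, LinearMap.sub_apply, hQT', hωS x hx n hn, compl₁₂_apply, LinearMap.id_apply,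
      sub_self]
  rwa [Q.orthogonal_orthogonal hQ hQr] at hperp

end

/-- Lemma on antisymmetric extensions: for a non-degenerate symmetric bilinear form `Q`
on `V`, a subspace `E` with `E₀ = E ∩ E^Q`, and a linear map `T : E → V/E`, one has
`Q(Tx, x) = 0` for all `x ∈ E₀` (a well-defined condition, expressed via arbitrary lifts)
if and only if `T` admits a lift `T' : V → V` in `so(Q)`. -/
theorem stmt_8 {V : Type*} [AddCommGroup V] [Module ℝ V] [FiniteDimensional ℝ V]
    (Q : LinearMap.BilinForm ℝ V)
    (hQsymm : ∀ u v : V, Q u v = Q v u)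
    (hQnd : LinearMap.BilinForm.Nondegenerate Q)
    (E : Submodule ℝ V) (T : E →ₗ[ℝ] V ⧸ E) :
    (∀ (x : V) (hx : x ∈ E), x ∈ LinearMap.BilinForm.orthogonal Q E →
        ∀ y : V, E.mkQ y = T ⟨x, hx⟩ → Q y x = 0) ↔
      ∃ T' : V →ₗ[ℝ] V, (∀ x : E, E.mkQ (T' x) = T x) ∧ ∀ v : V, Q (T' v) v = 0 := by
  have hQr : Q.IsRefl := fun u v h ↦ by rwa [hQsymm]
  obtain ⟨S, hS⟩ : ∃ S : Module.End ℝ V, ∀ x : E, E.mkQ (S x) = T x := by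
    obtain ⟨g, rfl⟩ := T.exists_extend
    obtain ⟨S, hS⟩ := Module.projective_lifting_property E.mkQ g E.mkQ_surjective
    exact ⟨S, fun x ↦ LinearMap.congr_fun hS x⟩
  constructor
  · intro h
    obtain ⟨T', hskew, hsub⟩ :=
      Q.exists_skew_sub_mem hQnd hQr E S fun x hx ↦ h x hx.1 hx.2 _ (hS ⟨x, hx.1⟩)
    refine ⟨T', fun x ↦ ?_, hskew⟩
    rw [← hS, mkQ_apply, mkQ_apply, Submodule.Quotient.eq]
    exact hsub x x.2
  · rintro ⟨T', hlift, hskew⟩ x hx hxE y hy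
    have hyT' : y - T' x ∈ E := (Submodule.Quotient.eq _).mp (hy.trans (hlift ⟨x, hx⟩).symm)
    calc Q y x = Q (y - T' x) x + Q (T' x) x := by simp
      _ = 0 := by rw [mem_orthogonal_iff.mp hxE _ hyT', hskew, add_zero]
end
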